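/- For every integer k ≥ 1 the fermionic series satisfy F_k(z1,z2) = Σ_{n,m ≥ 0} [ z1^{kn} z2^{km} q^{k(n²+m²−mn)} / ((q)_n (q)_m) ] · F_{k−1}(q^{2n−m} z1, q^{2m−n} z2), as an identity of formal power series in z1,z2 with coefficients in ℚ((q)); here F_{k−1}(q^{2n−m}z1, q^{2m−n}z2) denotes the series obtained from F_{k−1} by multiplying the coefficient of z1^a z2^b by q^{(2n−m)a+(2m−n)b}, and the sum over (n,m) converges coefficientwise (only finitely many pairs (n,m) contribute to any fixed monomial z1^a z2^b). -/
import Mathlib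


noncomputable section

open scoped BigOperators

/-- A formal series `Σ c(a,b,d) z1^a z2^b q^d`, encoded by its coefficient function. -/
abbrev Ser : Type := ℤ → ℤ → ℤ → ℚ

namespace Ser

/-- The series `1`. -/
def one : Ser := fun a b d => if a = 0 ∧ b = 0 ∧ d = 0 then 1 else 0

/-- The monomial `c · z1^p z2^r q^s`. -/
def mon (p r s : ℤ) (c : ℚ) : Ser := fun a b d => if a = p ∧ b = r ∧ d = s then c else 0

/-- Product of two series (coefficientwise convolution). -/
def mul (f g : Ser) : Ser := fun a b d =>
  ∑ᶠ x : ℤ × ℤ × ℤ, f x.1 x.2.1 x.2.2 * g (a - x.1) (b - x.2.1) (d - x.2.2)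

end Ser

infixl:70 " ⊛ₛ " => Ser.mul

namespace Ser

/-- `prodR g n = g 0 ⊛ₛ g 1 ⊛ₛ ⋯ ⊛ₛ g (n-1)`. -/
def prodR (g : ℕ → Ser) : ℕ → Ser
  | 0 => one
  | n + 1 => prodR g n ⊛ₛ g n

/-- Monomial attached to a triple `v = (v₁,v₂,v₃)`, meaning `z1^{v₁} z2^{v₂} q^{v₃}`. -/
def mon3 (v : ℤ × ℤ × ℤ) (c : ℚ) : Ser := mon v.1 v.2.1 v.2.2 c

/-- The triple of `q^c`. -/
def qe (c : ℤ) : ℤ × ℤ × ℤ := (0, 0, c)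

/-- `(x)_n = ∏_{i<n} (1 - x q^i)` where `x = z1^{v₁} z2^{v₂} q^{v₃}`. -/
def poch3 (v : ℤ × ℤ × ℤ) (n : ℕ) : Ser := prodR (fun i => one - mon3 (v + qe (i : ℤ)) 1) n

/-- `(x)_∞ = ∏_{i≥0} (1 - x q^i) = Σ_{T ⊆ ℕ finite} (-1)^{|T|} x^{|T|} q^{Σ T}`. -/
def pochInf3 (v : ℤ × ℤ × ℤ) : Ser := fun a b d =>
  ∑ᶠ T : Finset ℕ,
    if (T.card : ℤ) * v.1 = a ∧ (T.card : ℤ) * v.2.1 = b ∧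
        (T.card : ℤ) * v.2.2 + ∑ i ∈ T, (i : ℤ) = d then (-1 : ℚ) ^ T.card else 0

/-- Expansion `Σ_{α≥0} x^α` of `(1-x)⁻¹` for `x = z1^{v₁} z2^{v₂} q^{v₃}` with
`(v₁,v₂) ≥ (0,0)`. -/
def geom (v : ℤ × ℤ × ℤ) : Ser := fun a b d =>
  ∑ᶠ α : ℕ, if (α : ℤ) * v.1 = a ∧ (α : ℤ) * v.2.1 = b ∧ (α : ℤ) * v.2.2 = d
    then (1 : ℚ) else 0

/-- Expansion `-Σ_{α≥1} x^{-α}` of `(1-x)⁻¹` for `x = z1^{v₁} z2^{v₂} q^{v₃}` with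
`(v₁,v₂) ≤ (0,0)`. -/
def geomNeg (v : ℤ × ℤ × ℤ) : Ser := fun a b d =>
  -∑ᶠ α : ℕ, if ((α : ℤ) + 1) * v.1 = -a ∧ ((α : ℤ) + 1) * v.2.1 = -b ∧
      ((α : ℤ) + 1) * v.2.2 = -d then (1 : ℚ) else 0

/-- The expansion-convention series of `(1 - z1^{v₁} z2^{v₂} q^{v₃})⁻¹`. -/
def inv1 (v : ℤ × ℤ × ℤ) : Ser := if 0 ≤ v.1 ∧ 0 ≤ v.2.1 then geom v else geomNeg v

/-- The expansion of `1/(x)_n`. -/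
def invPoch3 (v : ℤ × ℤ × ℤ) (n : ℕ) : Ser := prodR (fun i => inv1 (v + qe (i : ℤ))) n

/-- The expansion of `1/(x)_∞ = ∏_{i≥0} (1 - x q^i)⁻¹`. -/
def invPochInf3 (v : ℤ × ℤ × ℤ) : Ser := fun a b d =>
  ∑ᶠ α : ℕ →₀ ℕ,
    if (α.sum fun _ m => (m : ℤ)) * v.1 = a ∧ (α.sum fun _ m => (m : ℤ)) * v.2.1 = b ∧
        (α.sum fun i m => (m : ℤ) * (v.2.2 + (i : ℤ))) = d then (1 : ℚ) else 0

/-- `f(q^{e1} z1, q^{e2} z2)`. -/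
def shiftQ (e1 e2 : ℤ) (f : Ser) : Ser := fun a b d => f a b (d - e1 * a - e2 * b)

end Ser


/-- `prodFin k f = f 0 ⊛ₛ ⋯ ⊛ₛ f (k-1)`. -/
def prodFin : (k : ℕ) → (Fin k → Ser) → Ser
  | 0, _ => Ser.one
  | k + 1, f => prodFin k (fun i => f i.castSucc) ⊛ₛ f (Fin.last k)

/-- The fermionic term indexed by `((n_1,…,n_k),(m_1,…,m_k))`:
`z1^{Σ i·n_i} z2^{Σ i·m_i} q^{Σ min(i,j)(n_i n_j - m_i n_j + m_i m_j)}
  / ∏ (q)_{n_i}(q)_{m_i}`. -/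
def fermTerm (k : ℕ) (t : (Fin k → ℕ) × (Fin k → ℕ)) : Ser :=
  Ser.mon (∑ i : Fin k, ((i : ℕ) + 1 : ℤ) * (t.1 i : ℤ))
      (∑ i : Fin k, ((i : ℕ) + 1 : ℤ) * (t.2 i : ℤ))
      (∑ i : Fin k, ∑ j : Fin k,
        min ((i : ℕ) + 1 : ℤ) ((j : ℕ) + 1 : ℤ) *
          ((t.1 i : ℤ) * (t.1 j : ℤ) - (t.2 i : ℤ) * (t.1 j : ℤ) +
            (t.2 i : ℤ) * (t.2 j : ℤ))) 1 ⊛ₛ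
    prodFin k (fun i => Ser.invPoch3 (Ser.qe 1) (t.1 i)) ⊛ₛ
    prodFin k (fun i => Ser.invPoch3 (Ser.qe 1) (t.2 i))

/-- The fermionic series `F_k(z1,z2)` (for each monomial only finitely many index
tuples contribute, so the coefficientwise sum is well defined). -/
def fermSer (k : ℕ) : Ser := fun a b d =>
  ∑ᶠ t : (Fin k → ℕ) × (Fin k → ℕ), fermTerm k t a b d

/-- The `(n,m)`-summand
`z1^{kn} z2^{km} q^{k(n²+m²-mn)} / ((q)_n (q)_m) · F_{k-1}(q^{2n-m}z1, q^{2m-n}z2)`. -/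
def recTerm (k : ℕ) (nm : ℕ × ℕ) : Ser :=
  Ser.mon ((k : ℤ) * nm.1) ((k : ℤ) * nm.2)
      ((k : ℤ) * ((nm.1 : ℤ) ^ 2 + (nm.2 : ℤ) ^ 2 - (nm.1 : ℤ) * (nm.2 : ℤ))) 1 ⊛ₛ
    Ser.invPoch3 (Ser.qe 1) nm.1 ⊛ₛ Ser.invPoch3 (Ser.qe 1) nm.2 ⊛ₛ
    Ser.shiftQ (2 * (nm.1 : ℤ) - nm.2) (2 * (nm.2 : ℤ) - nm.1) (fermSer (k - 1))

namespace SerAux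

open Ser

lemma finsum_ne_zero_exists {ι : Type*} {f : ι → ℚ} (h : ∑ᶠ i, f i ≠ 0) : ∃ i, f i ≠ 0 := by
  by_contra hc
  push_neg at hc
  exact h (finsum_eq_zero_of_forall_eq_zero hc)

lemma mul_apply (f g : Ser) (a b d : ℤ) :
    (f ⊛ₛ g) a b d =
      ∑ᶠ x : ℤ × ℤ × ℤ, f x.1 x.2.1 x.2.2 * g (a - x.1) (b - x.2.1) (d - x.2.2) := rfl

lemma mon_mul (p r s : ℤ) (c : ℚ) (f : Ser) :
    Ser.mon p r s c ⊛ₛ f = fun a b d => c * f (a - p) (b - r) (d - s) := by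
  funext a b d
  rw [mul_apply]
  rw [finsum_eq_single _ ((p, r, s) : ℤ × ℤ × ℤ)]
  · simp [Ser.mon]
  · rintro ⟨x1, x2, x3⟩ hx
    simp only [Ser.mon]
    rw [if_neg, zero_mul]
    rintro ⟨h1, h2, h3⟩
    exact hx (by simp [h1, h2, h3])

lemma mul_comm' (f g : Ser) : f ⊛ₛ g = g ⊛ₛ f := by
  funext a b d
  rw [mul_apply, mul_apply]
  have := finsum_comp_equiv (Equiv.subLeft ((a, b, d) : ℤ × ℤ × ℤ))
    (f := fun x : ℤ × ℤ × ℤ => g x.1 x.2.1 x.2.2 * f (a - x.1) (b - x.2.1) (d - x.2.2))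
  rw [← this]
  apply finsum_congr
  rintro ⟨x1, x2, x3⟩
  simp only [Equiv.subLeft_apply]
  have e1 : (((a, b, d) : ℤ × ℤ × ℤ) - (x1, x2, x3)).1 = a - x1 := rfl
  have e2 : (((a, b, d) : ℤ × ℤ × ℤ) - (x1, x2, x3)).2.1 = b - x2 := rfl
  have e3 : (((a, b, d) : ℤ × ℤ × ℤ) - (x1, x2, x3)).2.2 = d - x3 := rfl
  rw [e1, e2, e3]
  simp only [sub_sub_cancel]
  exact mul_comm _ _

lemma mon_mul_assoc (p r s : ℤ) (c : ℚ) (f g : Ser) :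
    (Ser.mon p r s c ⊛ₛ f) ⊛ₛ g = Ser.mon p r s c ⊛ₛ (f ⊛ₛ g) := by
  funext a b d
  rw [mul_apply, mon_mul, mon_mul]
  simp only
  rw [mul_apply]
  have := finsum_comp_equiv (Equiv.addRight ((p, r, s) : ℤ × ℤ × ℤ))
    (f := fun x : ℤ × ℤ × ℤ =>
      (c * f (x.1 - p) (x.2.1 - r) (x.2.2 - s)) * g (a - x.1) (b - x.2.1) (d - x.2.2))
  rw [← this]
  rw [show (c * ∑ᶠ x : ℤ × ℤ × ℤ,
      f x.1 x.2.1 x.2.2 * g (a - p - x.1) (b - r - x.2.1) (d - s - x.2.2)) =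
      (c • ∑ᶠ x : ℤ × ℤ × ℤ,
      f x.1 x.2.1 x.2.2 * g (a - p - x.1) (b - r - x.2.1) (d - s - x.2.2)) from rfl]
  rw [smul_finsum]
  apply finsum_congr
  rintro ⟨x1, x2, x3⟩
  have e1 : ((((x1, x2, x3) : ℤ × ℤ × ℤ)) + (p, r, s)).1 = x1 + p := rfl
  have e2 : ((((x1, x2, x3) : ℤ × ℤ × ℤ)) + (p, r, s)).2.1 = x2 + r := rfl
  have e3 : ((((x1, x2, x3) : ℤ × ℤ × ℤ)) + (p, r, s)).2.2 = x3 + s := rfl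
  rw [Equiv.coe_addRight, e1, e2, e3]
  have e4 : a - (x1 + p) = a - p - x1 := by ring
  have e5 : b - (x2 + r) = b - r - x2 := by ring
  have e6 : d - (x3 + s) = d - s - x3 := by ring
  rw [e4, e5, e6]
  simp only [add_sub_cancel_right, smul_eq_mul]
  ring

lemma mul_mon_left (p r s : ℤ) (c : ℚ) (f g : Ser) :
    f ⊛ₛ (Ser.mon p r s c ⊛ₛ g) = Ser.mon p r s c ⊛ₛ (f ⊛ₛ g) := by
  rw [mul_comm' f _, mon_mul_assoc, mul_comm' g f]

lemma mon_mon (p r s p' r' s' : ℤ) (c c' : ℚ) (g : Ser) :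
    Ser.mon p r s c ⊛ₛ (Ser.mon p' r' s' c' ⊛ₛ g) =
      Ser.mon (p + p') (r + r') (s + s') (c * c') ⊛ₛ g := by
  rw [mon_mul, mon_mul, mon_mul]
  funext a b d
  simp only
  ring_nf


/-- The reindexing equivalence used for `shiftQ`. -/
def shiftEquiv (e1 e2 : ℤ) : (ℤ × ℤ × ℤ) ≃ (ℤ × ℤ × ℤ) where
  toFun x := (x.1, x.2.1, x.2.2 + e1 * x.1 + e2 * x.2.1)
  invFun x := (x.1, x.2.1, x.2.2 - e1 * x.1 - e2 * x.2.1)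
  left_inv := by rintro ⟨x1, x2, x3⟩; simp; ring
  right_inv := by rintro ⟨x1, x2, x3⟩; simp; ring

lemma shiftQ_mul (e1 e2 : ℤ) (f g : Ser) :
    Ser.shiftQ e1 e2 (f ⊛ₛ g) = Ser.shiftQ e1 e2 f ⊛ₛ Ser.shiftQ e1 e2 g := by
  funext a b d
  rw [Ser.shiftQ, mul_apply, mul_apply]
  have := finsum_comp_equiv (shiftEquiv e1 e2)
    (f := fun x : ℤ × ℤ × ℤ =>
      Ser.shiftQ e1 e2 f x.1 x.2.1 x.2.2 *
        Ser.shiftQ e1 e2 g (a - x.1) (b - x.2.1) (d - x.2.2))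
  rw [← this]
  apply finsum_congr
  rintro ⟨x1, x2, x3⟩
  simp only [shiftEquiv, Equiv.coe_fn_mk, Ser.shiftQ]
  have e3 : x3 + e1 * x1 + e2 * x2 - e1 * x1 - e2 * x2 = x3 := by ring
  have e4 : d - e1 * a - e2 * b - x3 =
      d - (x3 + e1 * x1 + e2 * x2) - e1 * (a - x1) - e2 * (b - x2) := by ring
  rw [e3, e4]

lemma shiftQ_of_zsupp (e1 e2 : ℤ) (f : Ser)
    (h : ∀ a b d, f a b d ≠ 0 → a = 0 ∧ b = 0) : Ser.shiftQ e1 e2 f = f := by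
  funext a b d
  rw [Ser.shiftQ]
  by_cases hab : a = 0 ∧ b = 0
  · rw [hab.1, hab.2]; ring_nf
  · have h1 : f a b (d - e1 * a - e2 * b) = 0 := by
      by_contra hne; exact hab (h _ _ _ hne)
    have h2 : f a b d = 0 := by
      by_contra hne; exact hab (h _ _ _ hne)
    rw [h1, h2]

lemma shiftQ_mon (e1 e2 p r s : ℤ) (c : ℚ) :
    Ser.shiftQ e1 e2 (Ser.mon p r s c) = Ser.mon p r (s + e1 * p + e2 * r) c := by
  funext a b d
  rw [Ser.shiftQ, Ser.mon, Ser.mon]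
  by_cases hab : a = p ∧ b = r
  · obtain ⟨rfl, rfl⟩ := hab
    by_cases hd : d - e1 * a - e2 * b = s
    · rw [if_pos ⟨rfl, rfl, hd⟩, if_pos ⟨rfl, rfl, by omega⟩]
    · rw [if_neg (by tauto), if_neg (by intro hh; exact hd (by omega))]
  · rw [if_neg (by tauto), if_neg (by tauto)]

/-- Series supported on `{a = 0, b = 0, d ≥ 0}`. -/
def DiagS (f : Ser) : Prop := ∀ a b d : ℤ, f a b d ≠ 0 → a = 0 ∧ b = 0 ∧ 0 ≤ d

lemma diagS_one : DiagS Ser.one := by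
  intro a b d h
  rw [Ser.one] at h
  by_cases hc : a = 0 ∧ b = 0 ∧ d = 0
  · exact ⟨hc.1, hc.2.1, le_of_eq hc.2.2.symm⟩
  · exact absurd (if_neg hc) h

lemma diagS_mul {f g : Ser} (hf : DiagS f) (hg : DiagS g) : DiagS (f ⊛ₛ g) := by
  intro a b d h
  obtain ⟨x, hx⟩ := finsum_ne_zero_exists h
  have h1 := hf _ _ _ (left_ne_zero_of_mul hx)
  have h2 := hg _ _ _ (right_ne_zero_of_mul hx)
  exact ⟨by omega, by omega, by omega⟩

lemma diagS_inv1_qe (i : ℕ) : DiagS (Ser.inv1 (Ser.qe 1 + Ser.qe (i : ℤ))) := by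
  intro a b d h
  have hv : Ser.qe 1 + Ser.qe (i : ℤ) = ((0 : ℤ), (0 : ℤ), (1 + i : ℤ)) := rfl
  rw [hv, Ser.inv1, if_pos ⟨le_refl 0, le_refl 0⟩, Ser.geom] at h
  obtain ⟨α, hα⟩ := finsum_ne_zero_exists h
  by_cases hc : (α : ℤ) * 0 = a ∧ (α : ℤ) * 0 = b ∧ (α : ℤ) * (1 + i) = d
  · refine ⟨by omega, by omega, ?_⟩
    have h0 : (0:ℤ) ≤ (α : ℤ) * (1 + i) := by positivity
    omega
  · exact absurd (if_neg hc) hα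

lemma diagS_invPoch3 (n : ℕ) : DiagS (Ser.invPoch3 (Ser.qe 1) n) := by
  rw [Ser.invPoch3]
  induction n with
  | zero => exact diagS_one
  | succ n ih => exact diagS_mul ih (diagS_inv1_qe n)

lemma diagS_prodFin {k : ℕ} {f : Fin k → Ser} (hf : ∀ i, DiagS (f i)) :
    DiagS (prodFin k f) := by
  induction k with
  | zero => exact diagS_one
  | succ k ih => exact diagS_mul (ih fun i => hf i.castSucc) (hf (Fin.last k))
lemma diag_mul_apply (W G : Ser) (hW : DiagS W) (e₀ a b d : ℤ)
    (hG : ∀ e, G a b e ≠ 0 → e₀ ≤ e) :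
    (W ⊛ₛ G) a b d = ∑ j ∈ Finset.Icc 0 (d - e₀), W 0 0 j * G a b (d - j) := by
  rw [mul_apply]
  rw [finsum_eq_sum_of_support_subset _
    (s := ({0} ×ˢ {0} ×ˢ Finset.Icc 0 (d - e₀) : Finset (ℤ × ℤ × ℤ)))]
  · rw [Finset.sum_product, Finset.sum_singleton, Finset.sum_product, Finset.sum_singleton]
    apply Finset.sum_congr rfl
    intro j _
    rw [sub_zero, sub_zero]
  · intro x hx
    simp only [Function.mem_support] at hx
    have h1 := hW _ _ _ (left_ne_zero_of_mul hx)
    have h2' := right_ne_zero_of_mul hx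
    rw [h1.1, h1.2.1, sub_zero, sub_zero] at h2'
    have h2 := hG _ h2'
    simp only [Finset.coe_product, Set.mem_prod, Finset.coe_singleton, Set.mem_singleton_iff,
      Finset.mem_coe, Finset.mem_Icc]
    exact ⟨h1.1, h1.2.1, h1.2.2, by omega⟩

lemma diag_mul_apply₀ (f g : Ser) (hf : DiagS f) (hg : DiagS g) (a b d : ℤ) :
    (f ⊛ₛ g) a b d = ∑ j ∈ Finset.Icc 0 d, f 0 0 j * g a b (d - j) := by
  have := diag_mul_apply f g hf 0 a b d (fun e he => (hg _ _ _ he).2.2)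
  simpa using this

lemma diag_assoc {f g h : Ser} (hf : DiagS f) (hg : DiagS g) (hh : DiagS h) :
    (f ⊛ₛ g) ⊛ₛ h = f ⊛ₛ (g ⊛ₛ h) := by
  funext a b d
  rw [diag_mul_apply₀ _ _ (diagS_mul hf hg) hh, diag_mul_apply₀ _ _ hf (diagS_mul hg hh)]
  have LHS : ∀ j ∈ Finset.Icc (0:ℤ) d,
      (f ⊛ₛ g) 0 0 j * h a b (d - j) =
        ∑ i ∈ Finset.Icc (0:ℤ) d, f 0 0 i * g 0 0 (j - i) * h a b (d - j) := by
    intro j hj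
    rw [diag_mul_apply₀ _ _ hf hg]
    rw [Finset.sum_subset (Finset.Icc_subset_Icc_right (Finset.mem_Icc.mp hj).2)]
    · rw [Finset.sum_mul]
    · intro i hi hni
      rw [Finset.mem_Icc] at hi
      rw [Finset.mem_Icc] at hni
      have : g 0 0 (j - i) = 0 := by
        by_contra hne
        have := (hg _ _ _ hne).2.2
        omega
      rw [this]; ring
  have RHS : ∀ i ∈ Finset.Icc (0:ℤ) d,
      f 0 0 i * (g ⊛ₛ h) a b (d - i) =
        ∑ j ∈ Finset.Icc (0:ℤ) d, f 0 0 i * (g 0 0 (j - i) * h a b (d - j)) := by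
    intro i hi
    rw [Finset.mem_Icc] at hi
    rw [diag_mul_apply₀ _ _ hg hh]
    have hmap : Finset.Icc i d = Finset.map (addRightEmbedding i) (Finset.Icc 0 (d - i)) := by
      rw [Finset.map_add_right_Icc, zero_add, sub_add_cancel]
    have step : ∑ j' ∈ Finset.Icc (0:ℤ) (d - i), g 0 0 j' * h a b (d - i - j') =
        ∑ j ∈ Finset.Icc i d, g 0 0 (j - i) * h a b (d - j) := by
      rw [hmap, Finset.sum_map]
      apply Finset.sum_congr rfl
      intro j' _
      simp only [addRightEmbedding_apply]
      congr 1
      · congr 1; ring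
      · congr 1; ring
    rw [step]
    rw [← Finset.sum_subset (Finset.Icc_subset_Icc_left hi.1)]
    · rw [Finset.mul_sum]
    · intro j hj hnj
      rw [Finset.mem_Icc] at hj
      rw [Finset.mem_Icc] at hnj
      have : g 0 0 (j - i) = 0 := by
        by_contra hne
        have := (hg _ _ _ hne).2.2
        omega
      rw [this]; ring
  rw [Finset.sum_congr rfl LHS, Finset.sum_congr rfl RHS, Finset.sum_comm]
  apply Finset.sum_congr rfl; intro j _
  apply Finset.sum_congr rfl; intro i _
  ring
/-- z1-exponent of the fermionic monomial. -/
def expA (k : ℕ) (t : (Fin k → ℕ) × (Fin k → ℕ)) : ℤ :=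
  ∑ i : Fin k, ((i : ℕ) + 1 : ℤ) * (t.1 i : ℤ)

def expB (k : ℕ) (t : (Fin k → ℕ) × (Fin k → ℕ)) : ℤ :=
  ∑ i : Fin k, ((i : ℕ) + 1 : ℤ) * (t.2 i : ℤ)

def expD (k : ℕ) (t : (Fin k → ℕ) × (Fin k → ℕ)) : ℤ :=
  ∑ i : Fin k, ∑ j : Fin k,
    min ((i : ℕ) + 1 : ℤ) ((j : ℕ) + 1 : ℤ) *
      ((t.1 i : ℤ) * (t.1 j : ℤ) - (t.2 i : ℤ) * (t.1 j : ℤ) + (t.2 i : ℤ) * (t.2 j : ℤ))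

def PP1 (k : ℕ) (t : (Fin k → ℕ) × (Fin k → ℕ)) : Ser :=
  prodFin k (fun i => Ser.invPoch3 (Ser.qe 1) (t.1 i))

def PP2 (k : ℕ) (t : (Fin k → ℕ) × (Fin k → ℕ)) : Ser :=
  prodFin k (fun i => Ser.invPoch3 (Ser.qe 1) (t.2 i))

lemma diagS_PP1 (k : ℕ) (t) : DiagS (PP1 k t) :=
  diagS_prodFin (fun i => diagS_invPoch3 (t.1 i))

lemma diagS_PP2 (k : ℕ) (t) : DiagS (PP2 k t) :=
  diagS_prodFin (fun i => diagS_invPoch3 (t.2 i))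

lemma fermTerm_eq (k : ℕ) (t : (Fin k → ℕ) × (Fin k → ℕ)) :
    fermTerm k t = Ser.mon (expA k t) (expB k t) (expD k t) 1 ⊛ₛ (PP1 k t ⊛ₛ PP2 k t) := by
  rw [fermTerm, mon_mul_assoc]
  rfl

lemma fermTerm_apply (k : ℕ) (t) (a b d : ℤ) :
    fermTerm k t a b d =
      (PP1 k t ⊛ₛ PP2 k t) (a - expA k t) (b - expB k t) (d - expD k t) := by
  rw [fermTerm_eq, mon_mul]
  simp

lemma fermTerm_support {k : ℕ} {t} {a b d : ℤ} (h : fermTerm k t a b d ≠ 0) :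
    expA k t = a ∧ expB k t = b ∧ expD k t ≤ d := by
  rw [fermTerm_apply] at h
  have := diagS_mul (diagS_PP1 k t) (diagS_PP2 k t) _ _ _ h
  exact ⟨by omega, by omega, by omega⟩

lemma expA_nonneg (k : ℕ) (t) : 0 ≤ expA k t := by
  apply Finset.sum_nonneg; intro i _; positivity

lemma expB_nonneg (k : ℕ) (t) : 0 ≤ expB k t := by
  apply Finset.sum_nonneg; intro i _; positivity

lemma expD_lower (k : ℕ) (t) : -(expA k t * expB k t) ≤ expD k t := by
  have hsplit : expD k t =
      (∑ i : Fin k, ∑ j : Fin k, min ((i : ℕ) + 1 : ℤ) ((j : ℕ) + 1 : ℤ) *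
        ((t.1 i : ℤ) * (t.1 j : ℤ))) -
      (∑ i : Fin k, ∑ j : Fin k, min ((i : ℕ) + 1 : ℤ) ((j : ℕ) + 1 : ℤ) *
        ((t.2 i : ℤ) * (t.1 j : ℤ))) +
      (∑ i : Fin k, ∑ j : Fin k, min ((i : ℕ) + 1 : ℤ) ((j : ℕ) + 1 : ℤ) *
        ((t.2 i : ℤ) * (t.2 j : ℤ))) := by
    rw [expD]
    simp only [mul_sub, mul_add, Finset.sum_add_distrib, Finset.sum_sub_distrib]
  have h1 : 0 ≤ ∑ i : Fin k, ∑ j : Fin k, min ((i : ℕ) + 1 : ℤ) ((j : ℕ) + 1 : ℤ) *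
      ((t.1 i : ℤ) * (t.1 j : ℤ)) := by
    apply Finset.sum_nonneg; intro i _; apply Finset.sum_nonneg; intro j _
    have : (0:ℤ) ≤ min ((i : ℕ) + 1 : ℤ) ((j : ℕ) + 1 : ℤ) := by
      apply le_min <;> positivity
    positivity
  have h3 : 0 ≤ ∑ i : Fin k, ∑ j : Fin k, min ((i : ℕ) + 1 : ℤ) ((j : ℕ) + 1 : ℤ) *
      ((t.2 i : ℤ) * (t.2 j : ℤ)) := by
    apply Finset.sum_nonneg; intro i _; apply Finset.sum_nonneg; intro j _
    have : (0:ℤ) ≤ min ((i : ℕ) + 1 : ℤ) ((j : ℕ) + 1 : ℤ) := by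
      apply le_min <;> positivity
    positivity
  have h2 : ∑ i : Fin k, ∑ j : Fin k, min ((i : ℕ) + 1 : ℤ) ((j : ℕ) + 1 : ℤ) *
      ((t.2 i : ℤ) * (t.1 j : ℤ)) ≤ expB k t * expA k t := by
    rw [expB, expA, Finset.sum_mul_sum]
    apply Finset.sum_le_sum; intro i _
    apply Finset.sum_le_sum; intro j _
    have hmin : min ((i : ℕ) + 1 : ℤ) ((j : ℕ) + 1 : ℤ) ≤ ((i : ℕ) + 1 : ℤ) * ((j : ℕ) + 1 : ℤ) := by
      have : min ((i : ℕ) + 1 : ℤ) ((j : ℕ) + 1 : ℤ) ≤ ((i : ℕ) + 1 : ℤ) := min_le_left _ _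
      nlinarith [Int.ofNat_nonneg i.1, Int.ofNat_nonneg j.1]
    have hnn : (0:ℤ) ≤ (t.2 i : ℤ) * (t.1 j : ℤ) := by positivity
    nlinarith
  nlinarith [h1, h2, h3, hsplit]

lemma fermTerm_tfinite (k : ℕ) (a b d : ℤ) :
    {t : (Fin k → ℕ) × (Fin k → ℕ) | fermTerm k t a b d ≠ 0}.Finite := by
  have hS : ({f : Fin k → ℕ | ∀ i, f i ≤ a.toNat} ×ˢ
      {f : Fin k → ℕ | ∀ i, f i ≤ b.toNat}).Finite := by
    apply Set.Finite.prod
    · have : {f : Fin k → ℕ | ∀ i, f i ≤ a.toNat} = Set.pi Set.univ (fun _ => Set.Iic a.toNat) := by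
        ext f; simp [Set.mem_pi, Pi.le_def]
      rw [this]
      exact Set.Finite.pi (fun i => Set.finite_Iic _)
    · have : {f : Fin k → ℕ | ∀ i, f i ≤ b.toNat} = Set.pi Set.univ (fun _ => Set.Iic b.toNat) := by
        ext f; simp [Set.mem_pi, Pi.le_def]
      rw [this]
      exact Set.Finite.pi (fun i => Set.finite_Iic _)
  apply hS.subset
  intro t ht
  obtain ⟨hA, hB, _⟩ := fermTerm_support ht
  constructor
  · intro i
    have hle : ((i : ℕ) + 1 : ℤ) * (t.1 i : ℤ) ≤ expA k t := by
      apply Finset.single_le_sum (f := fun j : Fin k => ((j : ℕ) + 1 : ℤ) * (t.1 j : ℤ))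
      · intro j _; positivity
      · exact Finset.mem_univ i
    have h1 : (t.1 i : ℤ) ≤ ((i : ℕ) + 1 : ℤ) * (t.1 i : ℤ) := by nlinarith [Int.ofNat_nonneg (t.1 i), Int.ofNat_nonneg i.1]
    omega
  · intro i
    have hle : ((i : ℕ) + 1 : ℤ) * (t.2 i : ℤ) ≤ expB k t := by
      apply Finset.single_le_sum (f := fun j : Fin k => ((j : ℕ) + 1 : ℤ) * (t.2 j : ℤ))
      · intro j _; positivity
      · exact Finset.mem_univ i
    have h1 : (t.2 i : ℤ) ≤ ((i : ℕ) + 1 : ℤ) * (t.2 i : ℤ) := by nlinarith [Int.ofNat_nonneg (t.2 i), Int.ofNat_nonneg i.1]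
    omega
lemma diagS_zsupp {f : Ser} (hf : DiagS f) : ∀ a b d, f a b d ≠ 0 → a = 0 ∧ b = 0 :=
  fun a b d h => ⟨(hf a b d h).1, (hf a b d h).2.1⟩

/-- `recTerm` with a general series in place of `fermSer (k-1)`. -/
def recTermF (k : ℕ) (nm : ℕ × ℕ) (f : Ser) : Ser :=
  Ser.mon ((k : ℤ) * nm.1) ((k : ℤ) * nm.2)
      ((k : ℤ) * ((nm.1 : ℤ) ^ 2 + (nm.2 : ℤ) ^ 2 - (nm.1 : ℤ) * (nm.2 : ℤ))) 1 ⊛ₛ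
    Ser.invPoch3 (Ser.qe 1) nm.1 ⊛ₛ Ser.invPoch3 (Ser.qe 1) nm.2 ⊛ₛ
    Ser.shiftQ (2 * (nm.1 : ℤ) - nm.2) (2 * (nm.2 : ℤ) - nm.1) f

lemma recTerm_eq_F (k : ℕ) (nm : ℕ × ℕ) : recTerm k nm = recTermF k nm (fermSer (k - 1)) := rfl

lemma recTermF_eq (k : ℕ) (nm : ℕ × ℕ) (f : Ser) :
    recTermF k nm f =
      Ser.mon ((k : ℤ) * nm.1) ((k : ℤ) * nm.2)
          ((k : ℤ) * ((nm.1 : ℤ) ^ 2 + (nm.2 : ℤ) ^ 2 - (nm.1 : ℤ) * (nm.2 : ℤ))) 1 ⊛ₛ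
        ((Ser.invPoch3 (Ser.qe 1) nm.1 ⊛ₛ Ser.invPoch3 (Ser.qe 1) nm.2) ⊛ₛ
          Ser.shiftQ (2 * (nm.1 : ℤ) - nm.2) (2 * (nm.2 : ℤ) - nm.1) f) := by
  rw [recTermF, mon_mul_assoc, mon_mul_assoc]

lemma recTermF_apply (k : ℕ) (nm : ℕ × ℕ) (f : Ser) (a b d : ℤ) :
    recTermF k nm f a b d =
      ((Ser.invPoch3 (Ser.qe 1) nm.1 ⊛ₛ Ser.invPoch3 (Ser.qe 1) nm.2) ⊛ₛ
          Ser.shiftQ (2 * (nm.1 : ℤ) - nm.2) (2 * (nm.2 : ℤ) - nm.1) f)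
        (a - (k : ℤ) * nm.1) (b - (k : ℤ) * nm.2)
        (d - (k : ℤ) * ((nm.1 : ℤ) ^ 2 + (nm.2 : ℤ) ^ 2 - (nm.1 : ℤ) * (nm.2 : ℤ))) := by
  rw [recTermF_eq, mon_mul]
  simp

lemma fermSer_zsupp (k : ℕ) : ∀ a b d : ℤ, fermSer k a b d ≠ 0 → 0 ≤ a ∧ 0 ≤ b := by
  intro a b d h
  rw [fermSer] at h
  obtain ⟨t, ht⟩ := finsum_ne_zero_exists h
  obtain ⟨hA, hB, _⟩ := fermTerm_support ht
  exact ⟨hA ▸ expA_nonneg k t, hB ▸ expB_nonneg k t⟩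

lemma recTerm_finite (k : ℕ) (hk : 1 ≤ k) (a b d : ℤ) :
    {nm : ℕ × ℕ | recTerm k nm a b d ≠ 0}.Finite := by
  apply Set.Finite.subset ((Set.finite_Iic a.toNat).prod (Set.finite_Iic b.toNat))
  intro nm hnm
  simp only [Set.mem_setOf_eq] at hnm
  rw [recTerm_eq_F, recTermF_apply] at hnm
  rw [mul_apply] at hnm
  obtain ⟨x, hx⟩ := finsum_ne_zero_exists hnm
  have h1 := diagS_mul (diagS_invPoch3 nm.1) (diagS_invPoch3 nm.2) _ _ _
    (left_ne_zero_of_mul hx)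
  have h2 := right_ne_zero_of_mul hx
  rw [Ser.shiftQ] at h2
  have h3 := fermSer_zsupp (k - 1) _ _ _ h2
  have hn : (k : ℤ) * nm.1 ≤ a := by omega
  have hm : (k : ℤ) * nm.2 ≤ b := by omega
  have hk' : (1 : ℤ) ≤ (k : ℤ) := by exact_mod_cast hk
  have hnn : (nm.1 : ℤ) ≤ (k : ℤ) * nm.1 := by nlinarith [Int.ofNat_nonneg nm.1]
  have hmm : (nm.2 : ℤ) ≤ (k : ℤ) * nm.2 := by nlinarith [Int.ofNat_nonneg nm.2]
  constructor
  · simp only [Set.mem_Iic]; omega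
  · simp only [Set.mem_Iic]; omega
lemma expA_snoc (K : ℕ) (t1 t2 : Fin K → ℕ) (n m : ℕ) :
    expA (K + 1) (Fin.snoc t1 n, Fin.snoc t2 m) = expA K (t1, t2) + ((K : ℤ) + 1) * n := by
  rw [expA, expA, Fin.sum_univ_castSucc]
  simp only [Fin.snoc_castSucc, Fin.snoc_last, Fin.coe_castSucc, Fin.val_last]

lemma expB_snoc (K : ℕ) (t1 t2 : Fin K → ℕ) (n m : ℕ) :
    expB (K + 1) (Fin.snoc t1 n, Fin.snoc t2 m) = expB K (t1, t2) + ((K : ℤ) + 1) * m := by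
  rw [expB, expB, Fin.sum_univ_castSucc]
  simp only [Fin.snoc_castSucc, Fin.snoc_last, Fin.coe_castSucc, Fin.val_last]

lemma expD_snoc (K : ℕ) (t1 t2 : Fin K → ℕ) (n m : ℕ) :
    expD (K + 1) (Fin.snoc t1 n, Fin.snoc t2 m) =
      expD K (t1, t2) +
        ((2 * (n : ℤ) - m) * expA K (t1, t2) + (2 * (m : ℤ) - n) * expB K (t1, t2)) +
        ((K : ℤ) + 1) * ((n : ℤ) ^ 2 + (m : ℤ) ^ 2 - (n : ℤ) * m) := by
  have key1 : ∀ i : Fin K, min (((i : ℕ) : ℤ) + 1) (((K : ℕ) : ℤ) + 1) = ((i : ℕ) : ℤ) + 1 := by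
    intro i
    have := i.isLt
    apply min_eq_left
    omega
  have key2 : ∀ i : Fin K, min (((K : ℕ) : ℤ) + 1) (((i : ℕ) : ℤ) + 1) = ((i : ℕ) : ℤ) + 1 := by
    intro i
    have := i.isLt
    apply min_eq_right
    omega
  rw [expD]
  simp only [Fin.sum_univ_castSucc, Fin.snoc_castSucc, Fin.snoc_last, Fin.coe_castSucc,
    Fin.val_last, key1, key2, min_self]
  rw [Finset.sum_add_distrib]
  have comb :
      (∑ i : Fin K, (((i : ℕ) : ℤ) + 1) * ((t1 i : ℤ) * n - (t2 i : ℤ) * n + (t2 i : ℤ) * m)) +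
        (∑ i : Fin K, (((i : ℕ) : ℤ) + 1) * ((n : ℤ) * (t1 i : ℤ) - (m : ℤ) * (t1 i : ℤ) +
          (m : ℤ) * (t2 i : ℤ))) =
      (2 * (n : ℤ) - m) * expA K (t1, t2) + (2 * (m : ℤ) - n) * expB K (t1, t2) := by
    rw [expA, expB, Finset.mul_sum, Finset.mul_sum, ← Finset.sum_add_distrib,
      ← Finset.sum_add_distrib]
    apply Finset.sum_congr rfl
    intro i _
    ring
  rw [expD]
  linear_combination comb
lemma PP1_snoc (K : ℕ) (t1 t2 : Fin K → ℕ) (n m : ℕ) :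
    PP1 (K + 1) (Fin.snoc t1 n, Fin.snoc t2 m) =
      PP1 K (t1, t2) ⊛ₛ Ser.invPoch3 (Ser.qe 1) n := by
  have harg : (fun i : Fin K =>
      Ser.invPoch3 (Ser.qe 1) ((Fin.snoc t1 n : Fin (K+1) → ℕ) i.castSucc)) =
      fun i : Fin K => Ser.invPoch3 (Ser.qe 1) (t1 i) := by
    funext i
    have h : (Fin.snoc t1 n : Fin (K+1) → ℕ) i.castSucc = t1 i := by simp
    rw [h]
  show prodFin K (fun i : Fin K =>
      Ser.invPoch3 (Ser.qe 1) ((Fin.snoc t1 n : Fin (K+1) → ℕ) i.castSucc)) ⊛ₛ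
      Ser.invPoch3 (Ser.qe 1) ((Fin.snoc t1 n : Fin (K+1) → ℕ) (Fin.last K)) = _
  rw [harg, Fin.snoc_last]
  rfl

lemma PP2_snoc (K : ℕ) (t1 t2 : Fin K → ℕ) (n m : ℕ) :
    PP2 (K + 1) (Fin.snoc t1 n, Fin.snoc t2 m) =
      PP2 K (t1, t2) ⊛ₛ Ser.invPoch3 (Ser.qe 1) m := by
  have harg : (fun i : Fin K =>
      Ser.invPoch3 (Ser.qe 1) ((Fin.snoc t2 m : Fin (K+1) → ℕ) i.castSucc)) =
      fun i : Fin K => Ser.invPoch3 (Ser.qe 1) (t2 i) := by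
    funext i
    have h : (Fin.snoc t2 m : Fin (K+1) → ℕ) i.castSucc = t2 i := by simp
    rw [h]
  show prodFin K (fun i : Fin K =>
      Ser.invPoch3 (Ser.qe 1) ((Fin.snoc t2 m : Fin (K+1) → ℕ) i.castSucc)) ⊛ₛ
      Ser.invPoch3 (Ser.qe 1) ((Fin.snoc t2 m : Fin (K+1) → ℕ) (Fin.last K)) = _
  rw [harg, Fin.snoc_last]
  rfl

lemma diag_shuffle (P1 P2 Q1 Q2 : Ser) (h1 : DiagS P1) (h2 : DiagS P2)
    (hq1 : DiagS Q1) (hq2 : DiagS Q2) :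
    (P1 ⊛ₛ Q1) ⊛ₛ (P2 ⊛ₛ Q2) = (Q1 ⊛ₛ Q2) ⊛ₛ (P1 ⊛ₛ P2) := by
  have e1 : Q1 ⊛ₛ (P2 ⊛ₛ Q2) = P2 ⊛ₛ (Q1 ⊛ₛ Q2) := by
    rw [mul_comm' Q1 (P2 ⊛ₛ Q2), diag_assoc h2 hq2 hq1, mul_comm' Q2 Q1]
  rw [diag_assoc h1 hq1 (diagS_mul h2 hq2), e1, ← diag_assoc h1 h2 (diagS_mul hq1 hq2),
    mul_comm' (P1 ⊛ₛ P2) (Q1 ⊛ₛ Q2)]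

lemma fermTerm_snoc (K : ℕ) (t1 t2 : Fin K → ℕ) (n m : ℕ) :
    fermTerm (K + 1) (Fin.snoc t1 n, Fin.snoc t2 m) =
      recTermF (K + 1) (n, m) (fermTerm K (t1, t2)) := by
  rw [fermTerm_eq, recTermF, fermTerm_eq K]
  dsimp only
  rw [shiftQ_mul, shiftQ_mul, shiftQ_mon]
  rw [shiftQ_of_zsupp _ _ _ (diagS_zsupp (diagS_PP1 K (t1, t2)))]
  rw [shiftQ_of_zsupp _ _ _ (diagS_zsupp (diagS_PP2 K (t1, t2)))]
  rw [mon_mul_assoc, mon_mul_assoc, mul_mon_left, mon_mon]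
  rw [PP1_snoc, PP2_snoc]
  rw [diag_shuffle _ _ _ _ (diagS_PP1 K (t1, t2)) (diagS_PP2 K (t1, t2))
    (diagS_invPoch3 n) (diagS_invPoch3 m)]
  rw [expA_snoc, expB_snoc, expD_snoc]
  congr 1 <;> push_cast <;> ring
lemma swap_sum {ι : Type*} (W : Ser) (hW : DiagS W) (G : ι → Ser) (a b d e₀ : ℤ)
    (hfin : ∀ e : ℤ, {i : ι | G i a b e ≠ 0}.Finite)
    (hlow : ∀ (i : ι) (e : ℤ), G i a b e ≠ 0 → e₀ ≤ e) :
    ∑ᶠ i : ι, (W ⊛ₛ G i) a b d = (W ⊛ₛ fun a' b' e => ∑ᶠ i : ι, G i a' b' e) a b d := by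
  classical
  set box : Finset ℤ := Finset.Icc (0:ℤ) (d - e₀) with hbox
  set I : Finset ι := box.biUnion (fun j => (hfin (d - j)).toFinset) with hI
  have hform : ∀ i : ι, (W ⊛ₛ G i) a b d = ∑ j ∈ box, W 0 0 j * G i a b (d - j) := by
    intro i
    exact diag_mul_apply W (G i) hW e₀ a b d (fun e he => hlow i e he)
  have hmemI : ∀ (i : ι) (j : ℤ), j ∈ box → G i a b (d - j) ≠ 0 → i ∈ I := by
    intro i j hj hne
    rw [hI]
    exact Finset.mem_biUnion.mpr ⟨j, hj, (hfin (d - j)).mem_toFinset.mpr hne⟩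
  have hLHS : ∑ᶠ i : ι, (W ⊛ₛ G i) a b d = ∑ i ∈ I, ∑ j ∈ box, W 0 0 j * G i a b (d - j) := by
    rw [finsum_eq_sum_of_support_subset (fun i => (W ⊛ₛ G i) a b d) (s := I)]
    · exact Finset.sum_congr rfl fun i _ => hform i
    · intro i hi
      rw [Function.mem_support, hform i] at hi
      obtain ⟨j, hj, hne⟩ := Finset.exists_ne_zero_of_sum_ne_zero hi
      exact hmemI i j hj (right_ne_zero_of_mul hne)
  have hRHS : (W ⊛ₛ fun a' b' e => ∑ᶠ i : ι, G i a' b' e) a b d =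
      ∑ j ∈ box, ∑ i ∈ I, W 0 0 j * G i a b (d - j) := by
    rw [diag_mul_apply W _ hW e₀ a b d]
    · apply Finset.sum_congr rfl
      intro j hj
      have : ∑ᶠ i : ι, G i a b (d - j) = ∑ i ∈ I, G i a b (d - j) := by
        apply finsum_eq_sum_of_support_subset
        intro i hi
        exact hmemI i j hj hi
      rw [this, Finset.mul_sum]
    · intro e he
      obtain ⟨i, hi⟩ := finsum_ne_zero_exists he
      exact hlow i e hi
  rw [hLHS, hRHS, Finset.sum_comm]

/-- The reindexing equivalence splitting off the last components. -/
def snocE (K : ℕ) :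
    ((ℕ × ℕ) × ((Fin K → ℕ) × (Fin K → ℕ))) ≃ ((Fin (K + 1) → ℕ) × (Fin (K + 1) → ℕ)) where
  toFun p := (Fin.snoc p.2.1 p.1.1, Fin.snoc p.2.2 p.1.2)
  invFun t := ((t.1 (Fin.last K), t.2 (Fin.last K)), (Fin.init t.1, Fin.init t.2))
  left_inv p := by
    obtain ⟨⟨n, m⟩, ⟨t1, t2⟩⟩ := p
    simp
  right_inv t := by
    obtain ⟨t1, t2⟩ := t
    simp

lemma main_eq (K : ℕ) (a b d : ℤ) :
    fermSer (K + 1) a b d = ∑ᶠ nm : ℕ × ℕ, recTerm (K + 1) nm a b d := by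
  have h0 : fermSer (K + 1) a b d =
      ∑ᶠ t : (Fin (K + 1) → ℕ) × (Fin (K + 1) → ℕ), fermTerm (K + 1) t a b d := rfl
  have h1 : ∑ᶠ t : (Fin (K + 1) → ℕ) × (Fin (K + 1) → ℕ), fermTerm (K + 1) t a b d =
      ∑ᶠ p : (ℕ × ℕ) × ((Fin K → ℕ) × (Fin K → ℕ)), fermTerm (K + 1) (snocE K p) a b d :=
    (finsum_comp_equiv (snocE K)).symm
  have hsupp : (Function.support
      fun p : (ℕ × ℕ) × ((Fin K → ℕ) × (Fin K → ℕ)) =>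
        fermTerm (K + 1) (snocE K p) a b d).Finite := by
    have : (Function.support
        fun p : (ℕ × ℕ) × ((Fin K → ℕ) × (Fin K → ℕ)) =>
          fermTerm (K + 1) (snocE K p) a b d) =
        (snocE K) ⁻¹' {t | fermTerm (K + 1) t a b d ≠ 0} := rfl
    rw [this]
    exact (fermTerm_tfinite (K + 1) a b d).preimage ((snocE K).injective.injOn)
  have h2 : ∑ᶠ p : (ℕ × ℕ) × ((Fin K → ℕ) × (Fin K → ℕ)), fermTerm (K + 1) (snocE K p) a b d =
      ∑ᶠ nm : ℕ × ℕ, ∑ᶠ t' : (Fin K → ℕ) × (Fin K → ℕ),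
        fermTerm (K + 1) (snocE K (nm, t')) a b d :=
    finsum_curry _ hsupp
  have h3 : ∀ nm : ℕ × ℕ, ∑ᶠ t' : (Fin K → ℕ) × (Fin K → ℕ),
      fermTerm (K + 1) (snocE K (nm, t')) a b d = recTerm (K + 1) nm a b d := by
    intro nm
    have hsnoc : (fun t' : (Fin K → ℕ) × (Fin K → ℕ) =>
        fermTerm (K + 1) (snocE K (nm, t')) a b d) =
        fun t' => recTermF (K + 1) nm (fermTerm K t') a b d := by
      funext t'
      have := fermTerm_snoc K t'.1 t'.2 nm.1 nm.2
      rw [show snocE K (nm, t') = (Fin.snoc t'.1 nm.1, Fin.snoc t'.2 nm.2) from rfl]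
      rw [this]
    rw [hsnoc]
    have happly : (fun t' : (Fin K → ℕ) × (Fin K → ℕ) =>
        recTermF (K + 1) nm (fermTerm K t') a b d) =
        fun t' => ((Ser.invPoch3 (Ser.qe 1) nm.1 ⊛ₛ Ser.invPoch3 (Ser.qe 1) nm.2) ⊛ₛ
          Ser.shiftQ (2 * (nm.1 : ℤ) - nm.2) (2 * (nm.2 : ℤ) - nm.1) (fermTerm K t'))
          (a - ((K + 1 : ℕ) : ℤ) * nm.1) (b - ((K + 1 : ℕ) : ℤ) * nm.2)
          (d - ((K + 1 : ℕ) : ℤ) *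
            ((nm.1 : ℤ) ^ 2 + (nm.2 : ℤ) ^ 2 - (nm.1 : ℤ) * nm.2)) := by
      funext t'
      exact recTermF_apply (K + 1) nm (fermTerm K t') a b d
    rw [happly]
    set a' : ℤ := a - ((K + 1 : ℕ) : ℤ) * nm.1 with ha'
    set b' : ℤ := b - ((K + 1 : ℕ) : ℤ) * nm.2 with hb'
    set d' : ℤ := d - ((K + 1 : ℕ) : ℤ) *
      ((nm.1 : ℤ) ^ 2 + (nm.2 : ℤ) ^ 2 - (nm.1 : ℤ) * nm.2) with hd'
    set e1 : ℤ := 2 * (nm.1 : ℤ) - nm.2 with he1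
    set e2 : ℤ := 2 * (nm.2 : ℤ) - nm.1 with he2
    have hswap := swap_sum (Ser.invPoch3 (Ser.qe 1) nm.1 ⊛ₛ Ser.invPoch3 (Ser.qe 1) nm.2)
      (diagS_mul (diagS_invPoch3 nm.1) (diagS_invPoch3 nm.2))
      (fun t' : (Fin K → ℕ) × (Fin K → ℕ) => Ser.shiftQ e1 e2 (fermTerm K t'))
      a' b' d' (e1 * a' + e2 * b' - a' * b')
      (fun e => by
        have : {t' : (Fin K → ℕ) × (Fin K → ℕ) |
            Ser.shiftQ e1 e2 (fermTerm K t') a' b' e ≠ 0} =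
            {t' : (Fin K → ℕ) × (Fin K → ℕ) |
              fermTerm K t' a' b' (e - e1 * a' - e2 * b') ≠ 0} := rfl
        rw [this]
        exact fermTerm_tfinite K a' b' _)
      (fun t' e he => by
        have hne : fermTerm K t' a' b' (e - e1 * a' - e2 * b') ≠ 0 := he
        obtain ⟨hA, hB, hD⟩ := fermTerm_support hne
        have hlow := expD_lower K t'
        rw [hA, hB] at hlow
        omega)
    rw [hswap]
    have hser : (fun a'' b'' e => ∑ᶠ t' : (Fin K → ℕ) × (Fin K → ℕ),
        Ser.shiftQ e1 e2 (fermTerm K t') a'' b'' e) =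
        Ser.shiftQ e1 e2 (fermSer K) := rfl
    rw [hser]
    rw [recTerm_eq_F]
    have hK : (K + 1) - 1 = K := rfl
    rw [hK]
    rw [recTermF_apply]
  rw [h0, h1, h2]
  exact finsum_congr h3

end SerAux

/-- for `k ≥ 1`,
`F_k(z1,z2) = Σ_{n,m≥0} z1^{kn} z2^{km} q^{k(n²+m²-mn)}/((q)_n(q)_m)
  · F_{k-1}(q^{2n-m}z1, q^{2m-n}z2)`, the sum over `(n,m)` converging
coefficientwise. -/
theorem fermionic_recursion (k : ℕ) (hk : 1 ≤ k) :
    (∀ a b d : ℤ, {nm : ℕ × ℕ | recTerm k nm a b d ≠ 0}.Finite) ∧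
      fermSer k = fun a b d => ∑ᶠ nm : ℕ × ℕ, recTerm k nm a b d := by
  constructor
  · exact fun a b d => SerAux.recTerm_finite k hk a b d
  · obtain ⟨K, rfl⟩ : ∃ K, k = K + 1 := ⟨k - 1, by omega⟩
    funext a b d
    exact SerAux.main_eq K a b d

end
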